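/- Let q, a, b, x ∈ ℂ with 0 < |q| < 1, x ≠ 0, and let k, n ∈ ℕ with k ≤ n. Assume 1 - a q^j x ≠ 0 for 0 ≤ j ≤ k - 1 and 1 - b q^j x ≠ 0 for 0 ≤ j ≤ n + k - 1. Then the k-th iterate of the q-differential operator applied to the function t ↦ (a t;q)_n/(b t;q)_n, evaluated at x, equals ((a x;q)_n (q;q)_n / ((b x;q)_n (b q^n x;q)_k)) · ∑_{i=0}^{k} [k choose i]_q q^{C(i,2)} (-a)^i b^{k-i} (b x;q)_i (q^n;q)_{k-i} / ((q;q)_{n-i} (a x;q)_i). -/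

import Mathlib

/-- The finite q-shifted factorial (a;q)_n = ∏_{j=0}^{n-1} (1 - a q^j). -/
noncomputable def qPoch (q a : ℂ) (n : ℕ) : ℂ :=
  ∏ j ∈ Finset.range n, (1 - a * q ^ j)

/-- The q-binomial coefficient [n choose k]_q = (q;q)_n / ((q;q)_k (q;q)_{n-k}). -/
noncomputable def qBinom (q : ℂ) (n k : ℕ) : ℂ :=
  qPoch q q n / (qPoch q q k * qPoch q q (n - k))

/-- The q-differential operator: (D_q f)(x) = (f(x) - f(qx))/x. -/
noncomputable def Dq (q : ℂ) (f : ℂ → ℂ) : ℂ → ℂ :=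
  fun x => (f x - f (q * x)) / x

/-! The q-Leibniz rule `D_q^k (f g) x = ∑ [k, i]_q (D_q^i f x) (D_q^(k-i) g (q^i x))`, whose
inductive step is q-Pascal, reduces the claim to the iterates of the two factors:
`D_q^i (a t; q)_(i+r) = (-a)^i q^C(i,2) (q^(r+1); q)_i (a q^i t; q)_r` and
`D_q^j (1 / (b t; q)_m) = b^j (q^m; q)_j / (b t; q)_(m+j)`, each a one-step computation iterated.
Splitting `(a x; q)_n`, `(q; q)_n` and `(b x; q)_(n+k)` at index `i` then matches the `i`-th
Leibniz term with the `i`-th summand. -/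

open Finset

section qPoch

variable (q : ℂ)

lemma qPoch_zero (y : ℂ) : qPoch q y 0 = 1 := prod_range_zero _

lemma qPoch_succ (y : ℂ) (m : ℕ) : qPoch q y (m + 1) = qPoch q y m * (1 - y * q ^ m) :=
  prod_range_succ _ _

lemma qPoch_succ' (y : ℂ) (m : ℕ) : qPoch q y (m + 1) = (1 - y) * qPoch q (y * q) m := by
  rw [qPoch, prod_range_succ', pow_zero, mul_one, mul_comm]
  exact congrArg _ (prod_congr rfl fun j _ => by ring)

lemma qPoch_add (y : ℂ) (s t : ℕ) :
    qPoch q y (s + t) = qPoch q y s * qPoch q (y * q ^ s) t := by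
  simp only [qPoch, prod_range_add, pow_add, mul_assoc]

variable {q}

lemma qPoch_ne_zero_of_add_left {y : ℂ} {s t : ℕ} (h : qPoch q y (s + t) ≠ 0) :
    qPoch q y s ≠ 0 :=
  left_ne_zero_of_mul (qPoch_add q y s t ▸ h)

lemma qPoch_ne_zero_of_add_right {y : ℂ} {s t : ℕ} (h : qPoch q y (s + t) ≠ 0) :
    qPoch q (y * q ^ s) t ≠ 0 :=
  right_ne_zero_of_mul (qPoch_add q y s t ▸ h)

lemma qPoch_mul_ne_zero_of_succ {y : ℂ} {m : ℕ} (h : qPoch q y (m + 1) ≠ 0) :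
    qPoch q (y * q) m ≠ 0 :=
  right_ne_zero_of_mul (qPoch_succ' q y m ▸ h)

lemma qPoch_self_ne_zero (hq : ∀ m : ℕ, q ^ (m + 1) ≠ 1) (m : ℕ) : qPoch q q m ≠ 0 :=
  prod_ne_zero_iff.mpr fun j _ => by
    rw [← pow_succ', sub_ne_zero]
    exact (hq j).symm

lemma pow_succ_ne_one_of_norm_lt_one (hq : ‖q‖ < 1) (m : ℕ) : q ^ (m + 1) ≠ 1 := by
  intro h
  have hnorm := congrArg norm h
  rw [norm_pow, norm_one] at hnorm
  exact (pow_lt_one₀ (norm_nonneg q) hq m.succ_ne_zero).ne hnorm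

end qPoch

section qBinom

variable {q : ℂ} (hq : ∀ m : ℕ, q ^ (m + 1) ≠ 1)
include hq

lemma qBinom_zero_right (k : ℕ) : qBinom q k 0 = 1 := by
  simp [qBinom, qPoch_zero, div_self (qPoch_self_ne_zero hq k)]

lemma qBinom_self (k : ℕ) : qBinom q k k = 1 := by
  simp [qBinom, qPoch_zero, div_self (qPoch_self_ne_zero hq k)]

lemma qBinom_succ_succ {i k : ℕ} (h : i < k) :
    qBinom q (k + 1) (i + 1) = qBinom q k i + q ^ (i + 1) * qBinom q k (i + 1) := by
  obtain ⟨s, rfl⟩ : ∃ s, k = i + s + 1 := ⟨k - i - 1, by omega⟩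
  have e₁ : i + s + 1 + 1 - (i + 1) = s + 1 := by omega
  have e₂ : i + s + 1 - (i + 1) = s := by omega
  have e₃ : i + s + 1 - i = s + 1 := by omega
  simp only [qBinom, e₁, e₂, e₃, qPoch_succ q q]
  have hi := qPoch_self_ne_zero hq i
  have hs := qPoch_self_ne_zero hq s
  have hi₁ : 1 - q * q ^ i ≠ 0 := by rw [← pow_succ']; exact sub_ne_zero.mpr (hq i).symm
  have hs₁ : 1 - q * q ^ s ≠ 0 := by rw [← pow_succ']; exact sub_ne_zero.mpr (hq s).symm
  field_simp
  ring

lemma sum_range_succ_qBinom_mul (k : ℕ) (T : ℕ → ℂ) :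
    ∑ i ∈ range (k + 2), qBinom q (k + 1) i * T i =
      ∑ i ∈ range (k + 1), qBinom q k i * (T (i + 1) + q ^ i * T i) := by
  have pascal : ∑ i ∈ range k, qBinom q (k + 1) (i + 1) * T (i + 1) =
      ∑ i ∈ range k, (qBinom q k i * T (i + 1) + qBinom q k (i + 1) * (q ^ (i + 1) * T (i + 1))) :=
    sum_congr rfl fun i hi => by rw [qBinom_succ_succ hq (mem_range.mp hi)]; ring
  simp only [mul_add, sum_add_distrib]
  rw [sum_range_succ', sum_range_succ, pascal, sum_add_distrib, sum_range_succ _ k,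
    sum_range_succ' _ k]
  simp only [qBinom_zero_right hq, qBinom_self hq, pow_zero]
  ring

end qBinom

section Dq

variable {q : ℂ}

lemma Dq_apply (f : ℂ → ℂ) (x : ℂ) : Dq q f x = (f x - f (q * x)) / x := rfl

lemma Dq_congr_apply {f g : ℂ → ℂ} {x : ℂ} (h₁ : f x = g x) (h₂ : f (q * x) = g (q * x)) :
    Dq q f x = Dq q g x := by
  rw [Dq_apply, Dq_apply, h₁, h₂]

lemma Dq_const_mul_apply (c : ℂ) (f : ℂ → ℂ) (x : ℂ) :
    Dq q (fun t => c * f t) x = c * Dq q f x := by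
  simp only [Dq_apply]; ring

lemma Dq_sum_apply {ι : Type*} (s : Finset ι) (f : ι → ℂ → ℂ) (x : ℂ) :
    Dq q (fun t => ∑ i ∈ s, f i t) x = ∑ i ∈ s, Dq q (f i) x := by
  simp only [Dq_apply, ← sum_sub_distrib, sum_div]

lemma Dq_mul_apply (f g : ℂ → ℂ) (x : ℂ) :
    Dq q (fun t => f t * g t) x = Dq q f x * g (q * x) + f x * Dq q g x := by
  simp only [Dq_apply]; ring

lemma Dq_comp_const_mul_apply (c : ℂ) (g : ℂ → ℂ) (x : ℂ) :
    Dq q (fun t => g (c * t)) x = c * Dq q g (c * x) := by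
  rcases eq_or_ne c 0 with rfl | hc
  · simp [Dq_apply]
  rcases eq_or_ne x 0 with rfl | hx
  · simp [Dq_apply]
  simp only [Dq_apply, mul_left_comm c q]
  field_simp

theorem iterate_Dq_mul (hq : ∀ m : ℕ, q ^ (m + 1) ≠ 1) (f g : ℂ → ℂ) (k : ℕ) (x : ℂ) :
    (Dq q)^[k] (fun t => f t * g t) x =
      ∑ i ∈ range (k + 1), qBinom q k i * ((Dq q)^[i] f x * (Dq q)^[k - i] g (q ^ i * x)) := by
  induction k generalizing x with
  | zero => simp [qBinom_zero_right hq]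
  | succ k ih =>
    rw [Function.iterate_succ_apply', funext ih, Dq_sum_apply, sum_range_succ_qBinom_mul hq]
    refine sum_congr rfl fun i hi => ?_
    have hik : k + 1 - i = k - i + 1 := by have := mem_range.mp hi; omega
    rw [Dq_const_mul_apply, Dq_mul_apply, Dq_comp_const_mul_apply,
      ← Function.iterate_succ_apply' (Dq q), ← Function.iterate_succ_apply' (Dq q), hik, Nat.add_sub_add_right, pow_succ, mul_assoc]
    ring

lemma Dq_qPoch_mul_succ {x : ℂ} (hx : x ≠ 0) (c : ℂ) (r : ℕ) :
    Dq q (fun t => qPoch q (c * t) (r + 1)) x = -c * (1 - q ^ (r + 1)) * qPoch q (c * x * q) r := by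
  rw [Dq_apply, qPoch_succ', qPoch_succ, show c * (q * x) = c * x * q by ring]
  field_simp
  ring

lemma iterate_Dq_qPoch_mul (hq : q ≠ 0) (c : ℂ) (i r : ℕ) {x : ℂ} (hx : x ≠ 0) :
    (Dq q)^[i] (fun t => qPoch q (c * t) (i + r)) x =
      (-c) ^ i * q ^ i.choose 2 * qPoch q (q ^ (r + 1)) i * qPoch q (c * q ^ i * x) r := by
  induction i generalizing r x with
  | zero => simp [qPoch_zero]
  | succ i ih =>
    set K := (-c) ^ i * q ^ i.choose 2 * qPoch q (q ^ (r + 1 + 1)) i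
    rw [Function.iterate_succ_apply', Nat.add_right_comm, Nat.add_assoc,
      Dq_congr_apply (g := fun t => K * qPoch q (c * q ^ i * t) (r + 1)) (ih (r + 1) hx)
        (ih (r + 1) (mul_ne_zero hq hx)), Dq_const_mul_apply,
      Dq_qPoch_mul_succ hx, qPoch_succ' q (q ^ (r + 1)), ← pow_succ, Nat.choose_succ_succ',
      Nat.choose_one_right, show c * q ^ i * x * q = c * q ^ (i + 1) * x by ring]
    ring

lemma Dq_inv_qPoch_mul {x : ℂ} (hx : x ≠ 0) (b : ℂ) (m : ℕ)
    (h : qPoch q (b * x) (m + 1) ≠ 0) :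
    Dq q (fun t => (qPoch q (b * t) m)⁻¹) x = b * (1 - q ^ m) / qPoch q (b * x) (m + 1) := by
  have e₁ : (qPoch q (b * x) m)⁻¹ = (1 - b * x * q ^ m) / qPoch q (b * x) (m + 1) := by
    rw [eq_div_iff h, qPoch_succ, ← mul_assoc, inv_mul_cancel₀ (qPoch_ne_zero_of_add_left h),
      one_mul]
  have e₂ : (qPoch q (b * x * q) m)⁻¹ = (1 - b * x) / qPoch q (b * x) (m + 1) := by
    rw [eq_div_iff h, qPoch_succ', mul_comm, mul_assoc,
      mul_inv_cancel₀ (qPoch_mul_ne_zero_of_succ h), mul_one]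
  rw [Dq_apply, show b * (q * x) = b * x * q by ring, e₁, e₂]
  field_simp
  ring

lemma iterate_Dq_inv_qPoch_mul (hq : q ≠ 0) (b : ℂ) (m j : ℕ) {x : ℂ} (hx : x ≠ 0)
    (h : qPoch q (b * x) (m + j) ≠ 0) :
    (Dq q)^[j] (fun t => (qPoch q (b * t) m)⁻¹) x =
      b ^ j * qPoch q (q ^ m) j / qPoch q (b * x) (m + j) := by
  induction j generalizing x with
  | zero => simp [qPoch_zero]
  | succ j ih =>
    rw [← Nat.add_assoc] at h ⊢
    have hqx : qPoch q (b * (q * x)) (m + j) ≠ 0 := by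
      rw [show b * (q * x) = b * x * q by ring]
      exact qPoch_mul_ne_zero_of_succ h
    set K := b ^ j * qPoch q (q ^ m) j
    simp only [div_eq_mul_inv] at ih
    rw [Function.iterate_succ_apply',
      Dq_congr_apply (g := fun t => K * (qPoch q (b * t) (m + j))⁻¹)
        (ih hx (qPoch_ne_zero_of_add_left h)) (ih (mul_ne_zero hq hx) hqx),
      Dq_const_mul_apply, Dq_inv_qPoch_mul hx b (m + j) h, qPoch_succ q (q ^ m), ← pow_add]
    ring

end Dq

lemma iterate_Dq_qPoch_mul_mul_iterate_Dq_inv_qPoch_mul {q : ℂ} (hq : q ≠ 0)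
    (hq' : ∀ m : ℕ, q ^ (m + 1) ≠ 1) (a b : ℂ) (i r s : ℕ) {x : ℂ} (hx : x ≠ 0)
    (ha : qPoch q (a * x) i ≠ 0) (hb : qPoch q (b * x) (i + r + (i + s)) ≠ 0) :
    (Dq q)^[i] (fun t => qPoch q (a * t) (i + r)) x *
        (Dq q)^[s] (fun t => (qPoch q (b * t) (i + r))⁻¹) (q ^ i * x) =
      qPoch q (a * x) (i + r) * qPoch q q (i + r) /
          (qPoch q (b * x) (i + r) * qPoch q (b * q ^ (i + r) * x) (i + s)) *
        (q ^ i.choose 2 * (-a) ^ i * b ^ s * (qPoch q (b * x) i * qPoch q (q ^ (i + r)) s) /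
          (qPoch q q r * qPoch q (a * x) i)) := by
  have hb' : qPoch q (b * x) (i + (i + r + s)) ≠ 0 := by convert hb using 2; omega
  have hbi : qPoch q (b * (q ^ i * x)) (i + r + s) ≠ 0 := by
    rw [show b * (q ^ i * x) = b * x * q ^ i by ring]
    exact qPoch_ne_zero_of_add_right hb'
  have hsplit_a : qPoch q (a * x) (i + r) = qPoch q (a * x) i * qPoch q (a * q ^ i * x) r := by
    rw [qPoch_add, mul_right_comm]
  have hsplit_q : qPoch q q (i + r) = qPoch q q r * qPoch q (q ^ (r + 1)) i := by
    rw [add_comm, qPoch_add, ← pow_succ']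
  have hsplit_b : qPoch q (b * x) (i + r) * qPoch q (b * q ^ (i + r) * x) (i + s) =
      qPoch q (b * x) i * qPoch q (b * (q ^ i * x)) (i + r + s) := by
    rw [show b * q ^ (i + r) * x = b * x * q ^ (i + r) by ring, ← qPoch_add,
      show b * (q ^ i * x) = b * x * q ^ i by ring, ← qPoch_add]
    congr 1
    omega
  have hqr := qPoch_self_ne_zero hq' r
  rw [iterate_Dq_qPoch_mul hq a i r hx,
    iterate_Dq_inv_qPoch_mul hq b (i + r) s (mul_ne_zero (pow_ne_zero i hq) hx) hbi,
    hsplit_a, hsplit_q, hsplit_b]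
  have hbi' := qPoch_ne_zero_of_add_left hb'
  -- hidden so that `field_simp` cannot rewrite the arguments of the factors it has to cancel
  generalize qPoch q (a * x) i = A at *
  generalize qPoch q (b * x) i = B at *
  field_simp

theorem stmt3 (q a b x : ℂ) (hq0 : 0 < ‖q‖) (hq1 : ‖q‖ < 1)
    (hx : x ≠ 0) (k n : ℕ) (hkn : k ≤ n)
    (ha : ∀ j : ℕ, j < k → 1 - a * q ^ j * x ≠ 0)
    (hb : ∀ j : ℕ, j < n + k → 1 - b * q ^ j * x ≠ 0) :
    (Dq q)^[k] (fun t => qPoch q (a * t) n / qPoch q (b * t) n) x =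
      qPoch q (a * x) n * qPoch q q n /
          (qPoch q (b * x) n * qPoch q (b * q ^ n * x) k) *
        ∑ i ∈ Finset.range (k + 1),
          qBinom q k i * q ^ (i.choose 2) * (-a) ^ i * b ^ (k - i) *
              (qPoch q (b * x) i * qPoch q (q ^ n) (k - i)) /
            (qPoch q q (n - i) * qPoch q (a * x) i) := by
  have hq : q ≠ 0 := norm_pos_iff.mp hq0
  have hq' := pow_succ_ne_one_of_norm_lt_one hq1
  have hA : qPoch q (a * x) k ≠ 0 :=
    prod_ne_zero_iff.mpr fun j hj => mul_right_comm a x (q ^ j) ▸ ha j (mem_range.mp hj)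
  have hB : qPoch q (b * x) (n + k) ≠ 0 :=
    prod_ne_zero_iff.mpr fun j hj => mul_right_comm b x (q ^ j) ▸ hb j (mem_range.mp hj)
  simp only [div_eq_mul_inv (qPoch q (a * _) n), iterate_Dq_mul hq', mul_sum]
  refine sum_congr rfl fun i hi => ?_
  obtain ⟨s, rfl⟩ := Nat.exists_eq_add_of_le (mem_range_succ_iff.mp hi)
  obtain ⟨r, rfl⟩ := Nat.exists_eq_add_of_le (le_of_add_le_left hkn)
  rw [Nat.add_sub_cancel_left, Nat.add_sub_cancel_left,
    iterate_Dq_qPoch_mul_mul_iterate_Dq_inv_qPoch_mul hq hq' a b i r s hx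
      (qPoch_ne_zero_of_add_left hA) hB]
  ring
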